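/- Let δ > 0, σ ∈ [δ/2, 3δ/2], and ρ ∈ [0,1). For n ∈ ℤ define gₙ : (0,∞) → ℂ by gₙ(t) = e^{-σt + i(n+ρ)δt}, so gₙ ∈ L²(0,∞;ℂ). Then, with C := 2π e^{2π}/(e^{2π} - 1), for every finitely supported family (cₙ)_{n∈ℤ} of complex numbers, ‖Σ_{n∈ℤ} cₙ gₙ‖²_{L²(0,∞)} ≤ (C/δ) Σ_{n∈ℤ} |cₙ|²; that is, (gₙ)_{n∈ℤ} is a Hilbert sequence in L²(0,∞) with constant at most (C/δ)^{1/2}. -/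

import Mathlib

/-!
Factor `∑ cₙ gₙ(t) = g₀(t) h(t)`, where `h(t) = ∑ cₙ e^{inδt}` is a trigonometric polynomial of
period `T = 2π/δ` and `|g₀(t)|² = e^{-2σt}`. By orthogonality of the exponentials,
`∫₀ᵀ |h|² = T ∑ |cₙ|²`. For a nonnegative `T`-periodic `u`, splitting `(0,∞)` at `T` and
shifting gives `(1 - e^{-2σT}) ∫₀^∞ e^{-2σt} u = ∫₀ᵀ e^{-2σt} u ≤ ∫₀ᵀ u`. Finally `σ ≥ δ/2`
gives `e^{-2σT} ≤ e^{-2π}`, whence the constant `T / (1 - e^{-2π}) = C/δ`.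
-/

open MeasureTheory Complex Set

noncomputable section

/-- The functions `gₙ(t) = e^{-σt + i(n+ρ)δt}` on `(0,∞)`. -/
def expFun (σ δ ρ : ℝ) (n : ℤ) (t : ℝ) : ℂ :=
  Complex.exp ((-(σ : ℂ) + ((n : ℝ) + ρ) * δ * Complex.I) * t)

open Function ComplexConjugate

def trigPoly (δ : ℝ) (s : Finset ℤ) (c : ℤ → ℂ) (t : ℝ) : ℂ :=
  ∑ n ∈ s, c n * exp (n * δ * I * t)

section TrigPoly

variable {δ : ℝ} (s : Finset ℤ) (c : ℤ → ℂ)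

lemma continuous_trigPoly : Continuous (trigPoly δ s c) := by
  unfold trigPoly; fun_prop

lemma periodic_trigPoly (hδ : δ ≠ 0) : Periodic (trigPoly δ s c) (2 * Real.pi / δ) := by
  intro t
  refine Finset.sum_congr rfl fun n _ => ?_
  have hδ' : (δ : ℂ) ≠ 0 := ofReal_ne_zero.mpr hδ
  rw [show (n : ℂ) * δ * I * ((t + 2 * Real.pi / δ : ℝ) : ℂ)
      = n * δ * I * t + n * (2 * Real.pi * I) by push_cast; field_simp,
    exp_add, exp_int_mul_two_pi_mul_I, mul_one]

lemma integral_exp_int_mul_I (hδ : δ ≠ 0) (k : ℤ) :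
    ∫ t in (0 : ℝ)..2 * Real.pi / δ, exp (k * δ * I * t)
      = if k = 0 then ((2 * Real.pi / δ : ℝ) : ℂ) else 0 := by
  split_ifs with hk
  · simp [hk]
  have hkδ : (k : ℂ) * δ * I ≠ 0 := by simp [hk, hδ]
  have hperiod : (k : ℂ) * δ * I * ((2 * Real.pi / δ : ℝ) : ℂ) = k * (2 * Real.pi * I) := by
    have hδ' : (δ : ℂ) ≠ 0 := ofReal_ne_zero.mpr hδ
    push_cast; field_simp
  rw [integral_exp_mul_complex hkδ, hperiod, exp_int_mul_two_pi_mul_I]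
  simp

lemma mul_conj_trigPoly (t : ℝ) :
    trigPoly δ s c t * conj (trigPoly δ s c t)
      = ∑ n ∈ s, ∑ m ∈ s, c n * conj (c m) * exp ((n - m : ℤ) * δ * I * t) := by
  simp only [trigPoly, map_sum, map_mul, Finset.sum_mul_sum, ← exp_conj]
  refine Finset.sum_congr rfl fun n _ => Finset.sum_congr rfl fun m _ => ?_
  rw [mul_mul_mul_comm, ← exp_add]
  congr 2
  simp only [conj_ofReal, map_intCast, conj_I]
  push_cast; ring

lemma integral_norm_sq_trigPoly (hδ : δ ≠ 0) :
    ∫ t in (0 : ℝ)..2 * Real.pi / δ, ‖trigPoly δ s c t‖ ^ 2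
      = 2 * Real.pi / δ * ∑ n ∈ s, ‖c n‖ ^ 2 := by
  apply ofReal_injective
  have hint : ∀ k : ℤ, ∀ z : ℂ, IntervalIntegrable (fun t : ℝ => z * exp (k * δ * I * t))
      volume 0 (2 * Real.pi / δ) := fun k z => by
    apply Continuous.intervalIntegrable; fun_prop
  simp_rw [← intervalIntegral.integral_ofReal, ofReal_pow, ← mul_conj', mul_conj_trigPoly]
  rw [intervalIntegral.integral_finsetSum fun n _ => ?_]
  · simp_rw [intervalIntegral.integral_finsetSum fun m _ => hint _ _,
      intervalIntegral.integral_const_mul, integral_exp_int_mul_I hδ, sub_eq_zero]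
    simp [Finset.mul_sum, mul_conj', mul_comm]
  · apply Continuous.intervalIntegrable; fun_prop

end TrigPoly

section ExpFun

variable (σ δ ρ : ℝ)

lemma continuous_expFun (n : ℤ) : Continuous (expFun σ δ ρ n) := by
  unfold expFun; fun_prop

lemma norm_expFun (n : ℤ) (t : ℝ) : ‖expFun σ δ ρ n t‖ = Real.exp (-σ * t) := by
  simp [expFun, Complex.norm_exp]

lemma sum_mul_expFun (s : Finset ℤ) (c : ℤ → ℂ) (t : ℝ) :
    ∑ n ∈ s, c n * expFun σ δ ρ n t = expFun σ δ ρ 0 t * trigPoly δ s c t := by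
  rw [trigPoly, Finset.mul_sum]
  refine Finset.sum_congr rfl fun n _ => ?_
  rw [expFun, expFun, mul_left_comm, ← exp_add]
  congr 2
  push_cast; ring

lemma norm_sq_sum_mul_expFun (s : Finset ℤ) (c : ℤ → ℂ) (t : ℝ) :
    ‖∑ n ∈ s, c n * expFun σ δ ρ n t‖ ^ 2 = Real.exp (-(2 * σ) * t) * ‖trigPoly δ s c t‖ ^ 2 := by
  rw [sum_mul_expFun, norm_mul, mul_pow, norm_expFun, ← Real.exp_nat_mul]
  congr 2
  push_cast; ring

end ExpFun

section Periodic

variable {g : ℝ → ℝ} {a T : ℝ}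

lemma integrableOn_Ioi_exp_neg_mul_of_periodic (ha : 0 < a) (hT : T ≠ 0) (hg : Continuous g)
    (hper : Periodic g T) (b : ℝ) :
    IntegrableOn (fun t => Real.exp (-a * t) * g t) (Ioi b) := by
  obtain ⟨C, hC⟩ := (hper.isBounded_of_continuous hT hg).exists_norm_le
  exact (exp_neg_integrableOn_Ioi b ha).mul_bdd hg.aestronglyMeasurable
    (ae_of_all _ fun t => hC _ (mem_range_self t))

lemma one_sub_exp_mul_setIntegral_Ioi_of_periodic (ha : 0 < a) (hT : 0 < T) (hg : Continuous g)
    (hper : Periodic g T) :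
    (1 - Real.exp (-a * T)) * ∫ t in Ioi 0, Real.exp (-a * t) * g t
      = ∫ t in 0..T, Real.exp (-a * t) * g t := by
  set F := fun t => Real.exp (-a * t) * g t
  have hF := integrableOn_Ioi_exp_neg_mul_of_periodic ha hT.ne' hg hper
  have hsplit : ∫ t in Ioi 0, F t = (∫ t in 0..T, F t) + ∫ t in Ioi T, F t := by
    rw [intervalIntegral.integral_of_le hT.le, ← Ioc_union_Ioi_eq_Ioi hT.le,
      setIntegral_union Ioc_disjoint_Ioi_same measurableSet_Ioi
        ((hF 0).mono_set Ioc_subset_Ioi_self) (hF T)]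
  have hshift : ∫ t in Ioi T, F t = Real.exp (-a * T) * ∫ t in Ioi 0, F t := by
    rw [← (measurePreserving_add_right volume T).setIntegral_preimage_emb
      (measurableEmbedding_addRight T), preimage_add_const_Ioi, sub_self,
      ← integral_const_mul]
    refine setIntegral_congr_fun measurableSet_Ioi fun t _ => ?_
    simp only [F, hper t, mul_add, Real.exp_add]
    ring
  rw [hsplit] at *
  linear_combination hshift

lemma setIntegral_Ioi_exp_neg_mul_le_of_periodic (ha : 0 < a) (hT : 0 < T) (hg : Continuous g)
    (hper : Periodic g T) (hg0 : ∀ t, 0 ≤ g t) :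
    ∫ t in Ioi 0, Real.exp (-a * t) * g t ≤ (1 - Real.exp (-a * T))⁻¹ * ∫ t in 0..T, g t := by
  have hr : 0 < 1 - Real.exp (-a * T) := by
    rw [sub_pos, Real.exp_lt_one_iff]; nlinarith
  rw [le_inv_mul_iff₀ hr, one_sub_exp_mul_setIntegral_Ioi_of_periodic ha hT hg hper]
  refine intervalIntegral.integral_mono_on hT.le ?_ ?_ fun t ht => ?_
  · apply Continuous.intervalIntegrable; fun_prop
  · exact hg.intervalIntegrable _ _
  · have : Real.exp (-a * t) ≤ 1 := Real.exp_le_one_iff.mpr (by nlinarith [ht.1])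
    nlinarith [hg0 t]

end Periodic

lemma inv_one_sub_exp_neg_mul_period_le {δ σ : ℝ} (hδ : 0 < δ) (hσ : δ / 2 ≤ σ) :
    (1 - Real.exp (-(2 * σ) * (2 * Real.pi / δ)))⁻¹ * (2 * Real.pi / δ)
      ≤ (2 * Real.pi * Real.exp (2 * Real.pi) / (Real.exp (2 * Real.pi) - 1)) / δ := by
  have hE : 1 < Real.exp (2 * Real.pi) := Real.one_lt_exp_iff.mpr (by positivity)
  have hr : Real.exp (-(2 * σ) * (2 * Real.pi / δ)) ≤ Real.exp (-(2 * Real.pi)) := by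
    rw [Real.exp_le_exp, neg_mul, neg_le_neg_iff, ← mul_div_assoc, le_div_iff₀ hδ]
    nlinarith [Real.pi_pos]
  have hr1 : Real.exp (-(2 * Real.pi)) < 1 := Real.exp_lt_one_iff.mpr (by linarith [Real.pi_pos])
  calc (1 - Real.exp (-(2 * σ) * (2 * Real.pi / δ)))⁻¹ * (2 * Real.pi / δ)
      ≤ (1 - Real.exp (-(2 * Real.pi)))⁻¹ * (2 * Real.pi / δ) := by
        gcongr
    _ = (2 * Real.pi * Real.exp (2 * Real.pi) / (Real.exp (2 * Real.pi) - 1)) / δ := by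
        rw [Real.exp_neg]
        field_simp

theorem stochastic_datko_pazy_stmt12_general
    (δ σ ρ : ℝ) (hδ : 0 < δ) (hσ : σ ∈ Set.Icc (δ / 2) (3 * δ / 2)) :
    (∀ n : ℤ, MemLp (expFun σ δ ρ n) 2 (volume.restrict (Set.Ioi (0 : ℝ)))) ∧
    ∀ (s : Finset ℤ) (c : ℤ → ℂ),
      ∫ t in Set.Ioi (0 : ℝ), ‖∑ n ∈ s, c n * expFun σ δ ρ n t‖ ^ 2
        ≤ ((2 * Real.pi * Real.exp (2 * Real.pi) / (Real.exp (2 * Real.pi) - 1)) / δ)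
            * ∑ n ∈ s, ‖c n‖ ^ 2 := by
  have h2σ : 0 < 2 * σ := by linarith [hσ.1]
  refine ⟨fun n => ?_, fun s c => ?_⟩
  · rw [memLp_two_iff_integrable_sq_norm (continuous_expFun σ δ ρ n).aestronglyMeasurable]
    refine (exp_neg_integrableOn_Ioi 0 h2σ).congr (ae_of_all _ fun t => ?_)
    simp only [norm_expFun, ← Real.exp_nat_mul]
    congr 1; push_cast; ring
  · have hper := (periodic_trigPoly s c hδ.ne').comp fun z => ‖z‖ ^ 2
    calc ∫ t in Ioi 0, ‖∑ n ∈ s, c n * expFun σ δ ρ n t‖ ^ 2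
        = ∫ t in Ioi 0, Real.exp (-(2 * σ) * t) * ‖trigPoly δ s c t‖ ^ 2 := by
          simp_rw [norm_sq_sum_mul_expFun]
      _ ≤ (1 - Real.exp (-(2 * σ) * (2 * Real.pi / δ)))⁻¹
            * ∫ t in 0..2 * Real.pi / δ, ‖trigPoly δ s c t‖ ^ 2 :=
          setIntegral_Ioi_exp_neg_mul_le_of_periodic h2σ (by positivity)
            ((continuous_trigPoly s c).norm.pow 2) hper fun t => by positivity
      _ = (1 - Real.exp (-(2 * σ) * (2 * Real.pi / δ)))⁻¹ * (2 * Real.pi / δ)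
            * ∑ n ∈ s, ‖c n‖ ^ 2 := by
          rw [integral_norm_sq_trigPoly s c hδ.ne', mul_assoc]
      _ ≤ _ := by
          gcongr
          exact inv_one_sub_exp_neg_mul_period_le hδ hσ.1

/-- Let `δ > 0`, `σ ∈ [δ/2, 3δ/2]`, `ρ ∈ [0,1)`, and
`gₙ(t) = e^{-σt + i(n+ρ)δt}` for `t ∈ (0,∞)`. Then `gₙ ∈ L²(0,∞;ℂ)` and, with
`C = 2π e^{2π}/(e^{2π}-1)`, for every finitely supported family `(cₙ)_{n∈ℤ}` of complex
numbers, `‖∑ₙ cₙ gₙ‖²_{L²(0,∞)} ≤ (C/δ) ∑ₙ |cₙ|²`; that is, `(gₙ)_{n∈ℤ}` is a Hilbert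
sequence in `L²(0,∞)` with constant at most `(C/δ)^{1/2}`. -/
theorem stochastic_datko_pazy_stmt12
    (δ σ ρ : ℝ) (hδ : 0 < δ) (hσ : σ ∈ Set.Icc (δ / 2) (3 * δ / 2))
    (hρ : ρ ∈ Set.Ico (0 : ℝ) 1) :
    (∀ n : ℤ, MemLp (expFun σ δ ρ n) 2 (volume.restrict (Set.Ioi (0 : ℝ)))) ∧
    ∀ (s : Finset ℤ) (c : ℤ → ℂ),
      ∫ t in Set.Ioi (0 : ℝ), ‖∑ n ∈ s, c n * expFun σ δ ρ n t‖ ^ 2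
        ≤ ((2 * Real.pi * Real.exp (2 * Real.pi) / (Real.exp (2 * Real.pi) - 1)) / δ)
            * ∑ n ∈ s, ‖c n‖ ^ 2 :=
  stochastic_datko_pazy_stmt12_general δ σ ρ hδ hσ

end
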